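/- Let B ∈ B(H) and A an arbitrary operator such that B^n A is closed for some integer n ≥ 2 and BA is closable. Then BA is closed. -/

import Mathlib

/-!
If `(x, y)` lies in the closure of the graph of `BA`, then applying the bounded map
`id × B^(n-1)` puts `(x, B^(n-1) y)` in the closure of the graph of `B^n A`, which is that graph
itself; hence `x ∈ D(B^n A) = D(A) = D(BA)`. So the closure of `BA` has the same domain as `BA`,
and an operator that agrees with its closure on the domain of the closure is the closure.
-/

namespace FP

open LinearPMap
open scoped ComplexOrder

/-- The graph of the natural-domain composition `g ∘ f` of two partially defined
linear operators. -/
def compGraph {R E F G : Type*} [Ring R] [AddCommGroup E] [Module R E] [AddCommGroup F]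
    [Module R F] [AddCommGroup G] [Module R G] (g : F →ₗ.[R] G) (f : E →ₗ.[R] F) :
    Submodule R (E × G) where
  carrier := {p | ∃ y : F, (p.1, y) ∈ f.graph ∧ (y, p.2) ∈ g.graph}
  add_mem' := by
    rintro ⟨a, b⟩ ⟨c, d⟩ ⟨y, hy1, hy2⟩ ⟨z, hz1, hz2⟩
    exact ⟨y + z, f.graph.add_mem hy1 hz1, g.graph.add_mem hy2 hz2⟩
  zero_mem' := ⟨0, f.graph.zero_mem, g.graph.zero_mem⟩
  smul_mem' := by
    rintro c ⟨a, b⟩ ⟨y, h1, h2⟩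
    exact ⟨c • y, f.graph.smul_mem c h1, g.graph.smul_mem c h2⟩

/-- The product (composition) `g ∘ f` of two partially defined linear operators,
defined on its natural domain `{x ∈ D(f) : f x ∈ D(g)}`. -/
noncomputable def pComp {R E F G : Type*} [Ring R] [AddCommGroup E] [Module R E] [AddCommGroup F]
    [Module R F] [AddCommGroup G] [Module R G] (g : F →ₗ.[R] G) (f : E →ₗ.[R] F) :
    E →ₗ.[R] G :=
  (compGraph g f).toLinearPMap

variable {H : Type*} [NormedAddCommGroup H] [InnerProductSpace ℂ H] [CompleteSpace H]

/-- The everywhere-defined partial operator associated with a bounded operator. -/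
def ofCLM (B : H →L[ℂ] H) : H →ₗ.[ℂ] H := B.toLinearMap.toPMap ⊤

/-- A densely defined partial operator `T` is normal when it is closed and `T*T = TT*`
(products on their natural domains). -/
def IsNormalPMap (T : H →ₗ.[ℂ] H) : Prop :=
  Dense (T.domain : Set H) ∧ T.IsClosed ∧ pComp T† T = pComp T T†

/-- A partial operator is positive when `⟨Tx, x⟩ ≥ 0` for all `x ∈ D(T)`. -/
def IsPosPMap (T : H →ₗ.[ℂ] H) : Prop :=
  ∀ x : T.domain, (0 : ℂ) ≤ inner ℂ (T x) (x : H)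

/-- A partial operator `A` is boundedly invertible if there is `B ∈ B(H)` with
`AB = I` and `BA ⊆ I`. -/
def BoundedlyInvertible (A : H →ₗ.[ℂ] H) : Prop :=
  ∃ B : H →L[ℂ] H, pComp A (ofCLM B) = ofCLM 1 ∧ pComp (ofCLM B) A ≤ ofCLM 1

/-- The operator `λI - A` on the domain of `A`. -/
noncomputable def shift (l : ℂ) (A : H →ₗ.[ℂ] H) : H →ₗ.[ℂ] H :=
  (l • LinearMap.id : H →ₗ[ℂ] H) +ᵥ (-A)

/-- The spectrum of a partial operator. -/
def pSpectrum (A : H →ₗ.[ℂ] H) : Set ℂ :=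
  {l | ¬ BoundedlyInvertible (shift l A)}

/-- Powers of a partial operator, on natural domains. -/
noncomputable def pPow (A : H →ₗ.[ℂ] H) : ℕ → H →ₗ.[ℂ] H
  | 0 => ofCLM 1
  | n + 1 => pComp A (pPow A n)

noncomputable def polyAux (p : Polynomial ℂ) (A : H →ₗ.[ℂ] H) : ℕ → H →ₗ.[ℂ] H
  | 0 => p.coeff 0 • pPow A 0
  | n + 1 => polyAux p A n + p.coeff (n + 1) • pPow A (n + 1)

/-- The polynomial `p` applied to a partial operator `A`, on its natural domain. -/
noncomputable def polyApply (p : Polynomial ℂ) (A : H →ₗ.[ℂ] H) : H →ₗ.[ℂ] H :=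
  polyAux p A p.natDegree

theorem _root_.LinearPMap.IsClosable.isClosed_of_domain_closure_le {R E F : Type*} [CommRing R]
    [AddCommGroup E] [AddCommGroup F] [Module R E] [Module R F] [TopologicalSpace E]
    [TopologicalSpace F] [ContinuousAdd E] [ContinuousAdd F] [TopologicalSpace R]
    [ContinuousSMul R E] [ContinuousSMul R F] {T : E →ₗ.[R] F} (hT : T.IsClosable)
    (hdom : T.closure.domain ≤ T.domain) : T.IsClosed := by
  have hT_eq : T = T.closure :=
    eq_of_le_of_domain_eq T.le_closure (le_antisymm T.le_closure.1 hdom)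
  rw [hT_eq]
  exact hT.closure_isClosed

theorem _root_.LinearPMap.IsClosable.domain_closure_le_of_mapsTo_graph {R E F G : Type*}
    [CommRing R] [AddCommGroup E] [AddCommGroup F] [AddCommGroup G] [Module R E] [Module R F]
    [Module R G] [TopologicalSpace E] [TopologicalSpace F] [TopologicalSpace G] [ContinuousAdd E]
    [ContinuousAdd F] [TopologicalSpace R] [ContinuousSMul R E] [ContinuousSMul R F]
    {T : E →ₗ.[R] F} {S : E →ₗ.[R] G} (hT : T.IsClosable) (hS : S.IsClosed) (C : F →L[R] G)
    (hC : Set.MapsTo ((ContinuousLinearMap.id R E).prodMap C) T.graph S.graph) :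
    T.closure.domain ≤ S.domain := by
  intro x hx
  have hx_cl : (x, T.closure ⟨x, hx⟩) ∈ closure (T.graph : Set (E × F)) := by
    rw [← Submodule.topologicalClosure_coe, hT.graph_closure_eq_closure_graph]
    exact T.closure.mem_graph ⟨x, hx⟩
  have hCx : (x, C (T.closure ⟨x, hx⟩)) ∈ S.graph := by
    have := map_mem_closure ((ContinuousLinearMap.id R E).prodMap C).continuous hx_cl hC
    rwa [hS.closure_eq] at this
  exact mem_domain_of_mem_graph hCx

lemma pComp_graph {R E F G : Type*} [Ring R] [AddCommGroup E] [Module R E] [AddCommGroup F]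
    [Module R F] [AddCommGroup G] [Module R G] (g : F →ₗ.[R] G) (f : E →ₗ.[R] F) :
    (pComp g f).graph = compGraph g f := by
  apply Submodule.toLinearPMap_graph_eq
  rintro ⟨a, b⟩ ⟨y, hfy, hgy⟩ (ha : a = 0)
  exact g.graph_fst_eq_zero_snd hgy (f.graph_fst_eq_zero_snd hfy ha)

section

variable {E : Type*} [NormedAddCommGroup E] [InnerProductSpace ℂ E]

lemma mem_graph_ofCLM_iff (B : E →L[ℂ] E) (x y : E) :
    (x, y) ∈ (ofCLM B).graph ↔ y = B x := by
  rw [LinearPMap.mem_graph_iff]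
  constructor
  · rintro ⟨z, rfl, rfl⟩
    rfl
  · rintro rfl
    exact ⟨⟨x, trivial⟩, rfl, rfl⟩

lemma mem_graph_pComp_ofCLM_iff (B : E →L[ℂ] E) (A : E →ₗ.[ℂ] E) (x y : E) :
    (x, y) ∈ (pComp (ofCLM B) A).graph ↔ ∃ z, (x, z) ∈ A.graph ∧ y = B z := by
  simp only [pComp_graph, compGraph, Submodule.mem_mk, AddSubmonoid.mem_mk,
    AddSubsemigroup.mem_mk, Set.mem_ofPred_eq, mem_graph_ofCLM_iff]

lemma domain_pComp_ofCLM (B : E →L[ℂ] E) (A : E →ₗ.[ℂ] E) :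
    (pComp (ofCLM B) A).domain = A.domain := by
  ext x
  constructor
  · intro hx
    obtain ⟨z, hz, -⟩ :=
      (mem_graph_pComp_ofCLM_iff B A x _).mp ((pComp (ofCLM B) A).mem_graph ⟨x, hx⟩)
    exact mem_domain_of_mem_graph hz
  · intro hx
    exact mem_domain_of_mem_graph
      ((mem_graph_pComp_ofCLM_iff B A x _).mpr ⟨_, A.mem_graph ⟨x, hx⟩, rfl⟩)

lemma mapsTo_graph_pComp_ofCLM_mul (C B : E →L[ℂ] E) (A : E →ₗ.[ℂ] E) :
    Set.MapsTo ((ContinuousLinearMap.id ℂ E).prodMap C) (pComp (ofCLM B) A).graph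
      (pComp (ofCLM (C * B)) A).graph := by
  rintro ⟨x, y⟩ hxy
  obtain ⟨z, hz, rfl⟩ := (mem_graph_pComp_ofCLM_iff B A x y).mp hxy
  exact (mem_graph_pComp_ofCLM_iff (C * B) A x _).mpr ⟨z, hz, rfl⟩

end

theorem stmt15 (B : H →L[ℂ] H) (A : H →ₗ.[ℂ] H) (n : ℕ) (hn : 2 ≤ n)
    (hclosed : (pComp (ofCLM (B ^ n)) A).IsClosed)
    (hclosable : (pComp (ofCLM B) A).IsClosable) :
    (pComp (ofCLM B) A).IsClosed := by
  obtain ⟨k, rfl⟩ : ∃ k, n = k + 1 := ⟨n - 1, by omega⟩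
  rw [pow_succ] at hclosed
  refine hclosable.isClosed_of_domain_closure_le ?_
  calc (pComp (ofCLM B) A).closure.domain
      ≤ (pComp (ofCLM (B ^ k * B)) A).domain :=
        hclosable.domain_closure_le_of_mapsTo_graph hclosed (B ^ k)
          (mapsTo_graph_pComp_ofCLM_mul (B ^ k) B A)
    _ = (pComp (ofCLM B) A).domain := by rw [domain_pComp_ofCLM, domain_pComp_ofCLM]

end FP
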